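/- arXiv:2009.03452 — 3 statements merged into one kernel-verified Lean document; each statement's English description precedes it below -/
import Mathlib

section
/- For each N, let [u,v]_N = Σ_{n=1}^N r_{n,N} u(x_{n,N}) v(x_{n,N}) be discrete inner products with nonnegative weights, and assume [u,v]_N → ⟨u,v⟩ as N → ∞ for all u, v ∈ ℙ_d(ℝ^q), where ⟨u,v⟩ = ∫_Ω u v ω dx. Let (u_N) and (v_N) be sequences in ℙ_d(ℝ^q) converging uniformly on the bounded domain Ω to u, v ∈ ℙ_d(ℝ^q) respectively. Then [u_N, v_N]_N → ⟨u, v⟩ as N → ∞. -/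
/-!
On each sample point, `|a b - a₀ b₀| ≤ δ (2 + a₀² + b₀²)` whenever `|a - a₀|, |b - b₀| ≤ δ ≤ 1`.
Summing with the nonnegative weights bounds `[u_N, v_N]_N - [u, v]_N` by `δ` times
`2 [1, 1]_N + [u, u]_N + [v, v]_N`, which converges by hypothesis since `1, u, v ∈ ℙ_d`. Uniform
convergence lets `δ → 0`, so `[u_N, v_N]_N` has the same limit `⟨u, v⟩` as `[u, v]_N`.
-/
open MvPolynomial MeasureTheory Filter Asymptotics

theorem abs_mul_sub_mul_le_of_abs_sub_le {a b a₀ b₀ δ : ℝ} (hδ : δ ≤ 1)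
    (ha : |a - a₀| ≤ δ) (hb : |b - b₀| ≤ δ) :
    |a * b - a₀ * b₀| ≤ δ * (2 + a₀ * a₀ + b₀ * b₀) := by
  have hδ₀ : 0 ≤ δ := (abs_nonneg _).trans ha
  -- `2 |t| ≤ 1 + t²` absorbs the linear terms into the squares.
  have h_a₀ : 2 * |a₀| ≤ 1 + a₀ * a₀ := by nlinarith [abs_mul_abs_self a₀, sq_nonneg (|a₀| - 1)]
  have h_b₀ : 2 * |b₀| ≤ 1 + b₀ * b₀ := by nlinarith [abs_mul_abs_self b₀, sq_nonneg (|b₀| - 1)]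
  calc |a * b - a₀ * b₀|
      = |(a - a₀) * (b - b₀) + (a - a₀) * b₀ + a₀ * (b - b₀)| := by congr 1; ring
    _ ≤ |a - a₀| * |b - b₀| + |a - a₀| * |b₀| + |a₀| * |b - b₀| := by
      simp only [← abs_mul]; exact abs_add_three _ _ _
    _ ≤ δ * δ + δ * |b₀| + |a₀| * δ := by gcongr
    _ ≤ δ * (2 + a₀ * a₀ + b₀ * b₀) := by
      nlinarith [mul_le_mul_of_nonneg_left h_a₀ hδ₀, mul_le_mul_of_nonneg_left h_b₀ hδ₀,
        mul_self_nonneg a₀, mul_self_nonneg b₀]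

theorem abs_sum_mul_mul_sub_le {ι : Type*} [Fintype ι] {r F G f g : ι → ℝ} {δ : ℝ}
    (hr : ∀ i, 0 ≤ r i) (hδ : δ ≤ 1)
    (hF : ∀ i, |F i - f i| ≤ δ) (hG : ∀ i, |G i - g i| ≤ δ) :
    |∑ i, r i * F i * G i - ∑ i, r i * f i * g i| ≤
      δ * (2 * ∑ i, r i + ∑ i, r i * f i * f i + ∑ i, r i * g i * g i) := by
  calc |∑ i, r i * F i * G i - ∑ i, r i * f i * g i|
      = |∑ i, r i * (F i * G i - f i * g i)| := by
        rw [← Finset.sum_sub_distrib]; simp only [mul_sub, mul_assoc]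
    _ ≤ ∑ i, r i * |F i * G i - f i * g i| := by
        refine (Finset.abs_sum_le_sum_abs _ _).trans_eq ?_
        simp only [abs_mul, abs_of_nonneg (hr _)]
    _ ≤ ∑ i, r i * (δ * (2 + f i * f i + g i * g i)) := by
        gcongr with i
        · exact hr i
        · exact abs_mul_sub_mul_le_of_abs_sub_le hδ (hF i) (hG i)
    _ = δ * (2 * ∑ i, r i + ∑ i, r i * f i * f i + ∑ i, r i * g i * g i) := by
        simp only [Finset.mul_sum, ← Finset.sum_add_distrib]
        exact Finset.sum_congr rfl fun i _ => by ring

theorem tendsto_sum_mul_mul_of_tendstoUniformlyOn {α X : Type*} {l : Filter α}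
    {ι : α → Type*} [∀ N, Fintype (ι N)] {S : Set X}
    {x : (N : α) → ι N → X} (hx : ∀ N n, x N n ∈ S)
    {r : (N : α) → ι N → ℝ} (hr : ∀ N n, 0 ≤ r N n)
    {F G : α → X → ℝ} {f g : X → ℝ} {s a b c : ℝ}
    (hF : TendstoUniformlyOn F f l S) (hG : TendstoUniformlyOn G g l S)
    (h_one : Tendsto (fun N => ∑ n, r N n) l (nhds s))
    (h_ff : Tendsto (fun N => ∑ n, r N n * f (x N n) * f (x N n)) l (nhds a))
    (h_gg : Tendsto (fun N => ∑ n, r N n * g (x N n) * g (x N n)) l (nhds b))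
    (h_fg : Tendsto (fun N => ∑ n, r N n * f (x N n) * g (x N n)) l (nhds c)) :
    Tendsto (fun N => ∑ n, r N n * F N (x N n) * G N (x N n)) l (nhds c) := by
  set B := fun N => 2 * ∑ n, r N n + ∑ n, r N n * f (x N n) * f (x N n) +
    ∑ n, r N n * g (x N n) * g (x N n)
  have hB : Tendsto B l (nhds (2 * s + a + b)) := (h_one.const_mul 2).add h_ff |>.add h_gg
  have h_diff : (fun N => ∑ n, r N n * F N (x N n) * G N (x N n) -
      ∑ n, r N n * f (x N n) * g (x N n)) =o[l] B := by
    refine IsLittleO.of_bound fun ε hε => ?_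
    have hδ : 0 < min ε 1 := lt_min hε one_pos
    filter_upwards [Metric.tendstoUniformlyOn_iff.mp hF _ hδ,
      Metric.tendstoUniformlyOn_iff.mp hG _ hδ] with N hFN hGN
    have hB₀ : 0 ≤ B N := by
      have h_mass : 0 ≤ ∑ n, r N n := Finset.sum_nonneg fun n _ => hr N n
      have h_sq (h : X → ℝ) : 0 ≤ ∑ n, r N n * h (x N n) * h (x N n) :=
        Finset.sum_nonneg fun n _ => by
          rw [mul_assoc]; exact mul_nonneg (hr N n) (mul_self_nonneg _)
      simp only [B]; linarith [h_sq f, h_sq g]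
    rw [Real.norm_eq_abs, Real.norm_eq_abs, abs_of_nonneg hB₀]
    refine (abs_sum_mul_mul_sub_le (hr N) (min_le_right _ _) (fun n => ?_) (fun n => ?_)).trans
      (mul_le_mul_of_nonneg_right (min_le_left _ _) hB₀)
    · rw [abs_sub_comm, ← Real.dist_eq]; exact (hFN _ (hx N n)).le
    · rw [abs_sub_comm, ← Real.dist_eq]; exact (hGN _ (hx N n)).le
  simpa using (isLittleO_one_iff ℝ).mp (h_diff.trans_isBigO (hB.isBigO_one ℝ)) |>.add h_fg

theorem discrete_inner_product_limit_general (q d : ℕ) (Ω : Set (Fin q → ℝ))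
    (ω : (Fin q → ℝ) → ℝ)
    (x : (N : ℕ) → Fin N → (Fin q → ℝ)) (hx : ∀ N n, x N n ∈ Ω)
    (r : (N : ℕ) → Fin N → ℝ) (hr : ∀ N n, 0 ≤ r N n)
    (hconv : ∀ f ∈ restrictTotalDegree (Fin q) ℝ d,
      ∀ g ∈ restrictTotalDegree (Fin q) ℝ d,
      Tendsto (fun N => ∑ n, r N n * eval (x N n) f * eval (x N n) g)
        atTop (nhds (∫ y in Ω, eval y f * eval y g * ω y)))
    (uN vN : ℕ → MvPolynomial (Fin q) ℝ) (u v : MvPolynomial (Fin q) ℝ)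
    (hu : u ∈ restrictTotalDegree (Fin q) ℝ d)
    (hv : v ∈ restrictTotalDegree (Fin q) ℝ d)
    (huconv : TendstoUniformlyOn (fun N y => eval y (uN N))
      (fun y => eval y u) atTop Ω)
    (hvconv : TendstoUniformlyOn (fun N y => eval y (vN N))
      (fun y => eval y v) atTop Ω) :
    Tendsto (fun N => ∑ n, r N n * eval (x N n) (uN N) * eval (x N n) (vN N))
      atTop (nhds (∫ y in Ω, eval y u * eval y v * ω y)) := by
  have h_one_mem : (1 : MvPolynomial (Fin q) ℝ) ∈ restrictTotalDegree (Fin q) ℝ d := by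
    simp [mem_restrictTotalDegree]
  have h_mass := hconv 1 h_one_mem 1 h_one_mem
  simp only [map_one, mul_one] at h_mass
  exact (tendsto_sum_mul_mul_of_tendstoUniformlyOn (ι := Fin) hx hr huconv hvconv h_mass
    (hconv u hu u hu) (hconv v hv v hv) (hconv u hu v hv) :)

/-- Lemma 4 of the paper: if the discrete inner products converge to the
continuous one on `ℙ_d(ℝ^q)` and `u_N → u`, `v_N → v` uniformly on the bounded
domain `Ω`, then `[u_N, v_N]_N → ⟨u, v⟩`. -/
theorem discrete_inner_product_limit (q d : ℕ) (Ω : Set (Fin q → ℝ))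
    (hbdd : Bornology.IsBounded Ω)
    (ω : (Fin q → ℝ) → ℝ) (hω : ∀ y ∈ Ω, 0 ≤ ω y)
    (hωint : IntegrableOn ω Ω)
    (x : (N : ℕ) → Fin N → (Fin q → ℝ)) (hx : ∀ N n, x N n ∈ Ω)
    (r : (N : ℕ) → Fin N → ℝ) (hr : ∀ N n, 0 ≤ r N n)
    (hconv : ∀ f ∈ restrictTotalDegree (Fin q) ℝ d,
      ∀ g ∈ restrictTotalDegree (Fin q) ℝ d,
      Tendsto (fun N => ∑ n, r N n * eval (x N n) f * eval (x N n) g)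
        atTop (nhds (∫ y in Ω, eval y f * eval y g * ω y)))
    (uN vN : ℕ → MvPolynomial (Fin q) ℝ) (u v : MvPolynomial (Fin q) ℝ)
    (huN : ∀ N, uN N ∈ restrictTotalDegree (Fin q) ℝ d)
    (hvN : ∀ N, vN N ∈ restrictTotalDegree (Fin q) ℝ d)
    (hu : u ∈ restrictTotalDegree (Fin q) ℝ d)
    (hv : v ∈ restrictTotalDegree (Fin q) ℝ d)
    (huconv : TendstoUniformlyOn (fun N y => eval y (uN N))
      (fun y => eval y u) atTop Ω)
    (hvconv : TendstoUniformlyOn (fun N y => eval y (vN N))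
      (fun y => eval y v) atTop Ω) :
    Tendsto (fun N => ∑ n, r N n * eval (x N n) (uN N) * eval (x N n) (vN N))
      atTop (nhds (∫ y in Ω, eval y u * eval y v * ω y)) :=
  discrete_inner_product_limit_general q d Ω ω x hx r hr hconv uN vN u v hu hv huconv hvconv
end

section
/- Assume the discrete inner products [·,·]_N converge to the continuous inner product ⟨u,v⟩ = ∫_Ω u v ω dx for all u, v ∈ ℙ_d(ℝ^q), that ⟨·,·⟩ is positive definite on ℙ_d(ℝ^q), and that for all sufficiently large N the [·,·]_N are positive definite on ℙ_d(ℝ^q). Let π_k(·; r_N) and π_k(·; ω), k = 1,…,K, be the orthonormal polynomials obtained by Gram–Schmidt orthogonalization of a fixed ordered monomial basis of ℙ_d(ℝ^q) with respect to [·,·]_N and ⟨·,·⟩, respectively. Then π_k(·; r_N) → π_k(·; ω) uniformly on the bounded domain Ω as N → ∞, for each k = 1,…,K. -/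
open MvPolynomial MeasureTheory Filter

/-!
Orthonormality together with triangularity with respect to the ordered basis `e` forces the
Gram–Schmidt recursion `π_k = w_k / √⟨w_k, w_k⟩` with `w_k = e_k - ∑_{j<k} ⟨e_k, π_j⟩ π_j`.
Its right-hand side depends continuously on the Gram matrix of `e` and on `π_1, …, π_{k-1}`,
so by induction on `k` the coefficients of the discrete orthonormal polynomials in the basis `e`
converge to those of the continuous ones. On the bounded set `Ω` every basis polynomial is
bounded, so convergence of the coefficients gives uniform convergence.
-/

open Submodule Topology
open LinearMap (BilinForm)

section IsPosTriangular

variable {ι V : Type*} [LinearOrder ι] [AddCommGroup V] [Module ℝ V]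

def IsPosTriangular (e a : ι → V) : Prop :=
  ∀ k, ∃ c : ℝ, 0 < c ∧ a k - c • e k ∈ span ℝ (e '' Set.Iio k)

namespace IsPosTriangular

variable {e a : ι → V}

theorem span_image_Iio_le [WellFoundedLT ι] (h : IsPosTriangular e a) (k : ι) :
    span ℝ (e '' Set.Iio k) ≤ span ℝ (a '' Set.Iio k) := by
  induction k using WellFoundedLT.induction with
  | _ k ih =>
  rw [span_le]
  rintro _ ⟨j, hj, rfl⟩
  obtain ⟨c, hc, hmem⟩ := h j
  have hej : e j = c⁻¹ • (a j - (a j - c • e j)) := by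
    rw [sub_sub_cancel, inv_smul_smul₀ hc.ne']
  rw [SetLike.mem_coe, hej]
  refine smul_mem _ _ (sub_mem (subset_span ⟨j, hj, rfl⟩) ?_)
  exact span_mono (Set.image_mono (Set.Iio_subset_Iio hj.le)) (ih j hj hmem)

theorem of_coe {P : Submodule ℝ V} {e a : ι → P}
    (h : IsPosTriangular (fun k => (e k : V)) (fun k => (a k : V))) : IsPosTriangular e a := by
  intro k
  obtain ⟨c, hc, hmem⟩ := h k
  refine ⟨c, hc, ?_⟩
  rw [← Submodule.comap_map_eq_of_injective P.injective_subtype (span ℝ _), ← span_image,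
    Set.image_image, Submodule.mem_comap]
  simpa using hmem

end IsPosTriangular

end IsPosTriangular

namespace LinearMap.BilinForm

section Orthonormal

variable {ι V : Type*} [DecidableEq ι] [AddCommGroup V] [Module ℝ V]

theorem eq_sum_of_mem_span {B : BilinForm ℝ V} {a : ι → V}
    (ha : ∀ k l, B (a k) (a l) = if k = l then 1 else 0) (s : Finset ι) {v : V}
    (hv : v ∈ span ℝ (a '' s)) : v = ∑ l ∈ s, B v (a l) • a l := by
  induction hv using Submodule.span_induction with
  | mem _ hx =>
    obtain ⟨j, hj, rfl⟩ := hx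
    simp [ha, Finset.sum_ite_eq, Finset.mem_coe.1 hj]
  | zero => simp
  | add x y _ _ hx hy =>
    conv_lhs => rw [hx, hy]
    simp [add_smul, Finset.sum_add_distrib]
  | smul c x _ hx =>
    conv_lhs => rw [hx]
    simp [Finset.smul_sum, smul_smul]

end Orthonormal

section GramSchmidt

variable {ι V : Type*} [LinearOrder ι] [AddCommGroup V] [Module ℝ V]

structure IsGramSchmidt (B : BilinForm ℝ V) (e a : ι → V) : Prop where
  apply_eq_ite : ∀ k l, B (a k) (a l) = if k = l then 1 else 0
  isPosTriangular : IsPosTriangular e a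

variable [LocallyFiniteOrderBot ι]

def gramSchmidtResidual (B : BilinForm ℝ V) (e a : ι → V) (k : ι) : V :=
  e k - ∑ j ∈ Finset.Iio k, B (e k) (a j) • a j

theorem IsGramSchmidt.eq_inv_sqrt_smul_gramSchmidtResidual [WellFoundedLT ι]
    {B : BilinForm ℝ V} {e a : ι → V} (h : B.IsGramSchmidt e a) (k : ι) :
    let w := B.gramSchmidtResidual e a k
    0 < B w w ∧ a k = (√(B w w))⁻¹ • w := by
  intro w
  obtain ⟨c, hc, hmem⟩ := h.isPosTriangular k
  have hv_mem : a k - c • w ∈ span ℝ (a '' ↑(Finset.Iio k)) := by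
    have hv : a k - c • w =
        (a k - c • e k) + c • ∑ j ∈ Finset.Iio k, B (e k) (a j) • a j := by
      simp only [w, gramSchmidtResidual, smul_sub]
      abel
    rw [hv, Finset.coe_Iio]
    refine add_mem (h.isPosTriangular.span_image_Iio_le k hmem)
      (smul_mem _ _ (sum_mem fun j hj => smul_mem _ _ (subset_span ⟨j, ?_, rfl⟩)))
    simpa using hj
  have hv_orth : ∀ l ∈ Finset.Iio k, B (a k - c • w) (a l) = 0 := by
    intro l hl
    have hlk : k ≠ l := (Finset.mem_Iio.1 hl).ne'
    simp [w, gramSchmidtResidual, h.apply_eq_ite, hlk, Finset.sum_ite_eq', hl]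
  have hak : a k = c • w := by
    rw [← sub_eq_zero, eq_sum_of_mem_span h.apply_eq_ite _ hv_mem]
    exact Finset.sum_eq_zero fun l hl => by rw [hv_orth l hl, zero_smul]
  have hnorm : c ^ 2 * B w w = 1 := by
    have := h.apply_eq_ite k k
    rw [if_pos rfl, hak] at this
    simpa [sq, mul_assoc] using this
  have hpos : 0 < B w w := pos_of_mul_pos_right (hnorm ▸ one_pos) (sq_nonneg c)
  refine ⟨hpos, ?_⟩
  have hsqrt : √(B w w) = c⁻¹ := by
    rw [show B w w = c⁻¹ ^ 2 by field_simp; linarith]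
    exact Real.sqrt_sq (inv_nonneg.2 hc.le)
  rw [hsqrt, inv_inv, hak]

end GramSchmidt

section Convergence

variable {α κ V : Type*} [Fintype κ] [AddCommGroup V] [Module ℝ V]

theorem tendsto_apply_of_tendsto_repr {l : Filter α} {B' : α → BilinForm ℝ V}
    {B : BilinForm ℝ V} (b : Module.Basis κ ℝ V)
    (hB : ∀ i j, Tendsto (fun n => B' n (b i) (b j)) l (𝓝 (B (b i) (b j))))
    {u v : α → V} {u₀ v₀ : V}
    (hu : ∀ i, Tendsto (fun n => b.repr (u n) i) l (𝓝 (b.repr u₀ i)))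
    (hv : ∀ i, Tendsto (fun n => b.repr (v n) i) l (𝓝 (b.repr v₀ i))) :
    Tendsto (fun n => B' n (u n) (v n)) l (𝓝 (B u₀ v₀)) := by
  have hsum (C : BilinForm ℝ V) (x y : V) :
      C x y = ∑ i, ∑ j, b.repr x i * (b.repr y j * C (b i) (b j)) := by
    rw [← LinearMap.sum_repr_mul_repr_mul b b x y]
    simp [Finsupp.sum_fintype]
  rw [hsum B]
  refine Tendsto.congr (fun n => (hsum (B' n) (u n) (v n)).symm) ?_
  exact tendsto_finsetSum _ fun i _ => tendsto_finsetSum _ fun j _ =>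
    (hu i).mul ((hv j).mul (hB i j))

variable {ι : Type*} [LinearOrder ι] [LocallyFiniteOrderBot ι] [WellFoundedLT ι]

theorem IsGramSchmidt.tendsto_repr {l : Filter α} {B' : α → BilinForm ℝ V}
    {B : BilinForm ℝ V} (b : Module.Basis κ ℝ V)
    (hB : ∀ i j, Tendsto (fun n => B' n (b i) (b j)) l (𝓝 (B (b i) (b j))))
    {e : ι → V} {a' : α → ι → V} {a : ι → V}
    (h' : ∀ᶠ n in l, (B' n).IsGramSchmidt e (a' n)) (h : B.IsGramSchmidt e a) (k : ι) (i : κ) :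
    Tendsto (fun n => b.repr (a' n k) i) l (𝓝 (b.repr (a k) i)) := by
  induction k using WellFoundedLT.induction generalizing i with
  | _ k ih =>
  have hw : ∀ i, Tendsto (fun n => b.repr ((B' n).gramSchmidtResidual e (a' n) k) i) l
      (𝓝 (b.repr (B.gramSchmidtResidual e a k) i)) := by
    intro i
    simp only [gramSchmidtResidual, map_sub, map_sum, map_smul, Finsupp.sub_apply,
      Finsupp.coe_finsetSum, Finset.sum_apply, Finsupp.smul_apply, smul_eq_mul]
    refine tendsto_const_nhds.sub (tendsto_finsetSum _ fun j hj => ?_)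
    have hj : j < k := Finset.mem_Iio.1 hj
    exact (tendsto_apply_of_tendsto_repr b hB (fun _ => tendsto_const_nhds) (ih j hj)).mul
      (ih j hj i)
  obtain ⟨hpos, hak⟩ := h.eq_inv_sqrt_smul_gramSchmidtResidual k
  have hlim := (((Real.continuous_sqrt.tendsto _).comp
    (tendsto_apply_of_tendsto_repr b hB hw hw)).inv₀ (Real.sqrt_pos.2 hpos).ne').mul (hw i)
  rw [hak, map_smul, Finsupp.smul_apply, smul_eq_mul]
  refine hlim.congr' ?_
  filter_upwards [h'] with n hn
  rw [(hn.eq_inv_sqrt_smul_gramSchmidtResidual k).2, map_smul, Finsupp.smul_apply, smul_eq_mul]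
  rfl

end Convergence

end LinearMap.BilinForm

theorem tendstoUniformlyOn_sum_mul {α ι X : Type*} [Fintype ι] {l : Filter α} {s : Set X}
    {g : ι → X → ℝ} (hg : ∀ i, ∃ C, ∀ y ∈ s, |g i y| ≤ C) {c : α → ι → ℝ} {c₀ : ι → ℝ}
    (hc : ∀ i, Tendsto (fun n => c n i) l (𝓝 (c₀ i))) :
    TendstoUniformlyOn (fun n y => ∑ i, c n i * g i y) (fun y => ∑ i, c₀ i * g i y) l s := by
  choose C hC using hg
  have hM : Tendsto (fun n => ∑ i, |c n i - c₀ i| * C i) l (𝓝 0) := by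
    simpa using tendsto_finsetSum _ fun i _ => ((hc i).sub_const (c₀ i)).abs.mul_const (C i)
  rw [Metric.tendstoUniformlyOn_iff]
  intro ε hε
  filter_upwards [hM.eventually (gt_mem_nhds hε)] with n hn y hy
  calc dist (∑ i, c₀ i * g i y) (∑ i, c n i * g i y)
      = |∑ i, (c n i - c₀ i) * g i y| := by
        rw [Real.dist_eq, abs_sub_comm, ← Finset.sum_sub_distrib]
        simp only [sub_mul]
    _ ≤ ∑ i, |c n i - c₀ i| * C i := by
        refine (Finset.abs_sum_le_sum_abs _ _).trans (Finset.sum_le_sum fun i _ => ?_)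
        rw [abs_mul]
        exact mul_le_mul_of_nonneg_left (hC i y hy) (abs_nonneg _)
    _ < ε := hn

namespace MvPolynomial

variable {σ : Type*}

noncomputable def discreteForm {ι : Type*} [Fintype ι] (x : ι → σ → ℝ) (r : ι → ℝ) :
    BilinForm ℝ (MvPolynomial σ ℝ) :=
  LinearMap.mk₂ ℝ (fun f g => ∑ m, r m * eval (x m) f * eval (x m) g)
    (fun f₁ f₂ g => by simp only [map_add, mul_add, add_mul, Finset.sum_add_distrib])
    (fun c f g => by
      simp only [smul_eval, Finset.mul_sum, smul_eq_mul]
      exact Finset.sum_congr rfl fun m _ => by ring)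
    (fun f g₁ g₂ => by simp only [map_add, mul_add, Finset.sum_add_distrib])
    (fun c f g => by
      simp only [smul_eval, Finset.mul_sum, smul_eq_mul]
      exact Finset.sum_congr rfl fun m _ => by ring)

variable [Fintype σ]

theorem exists_abs_eval_le (p : MvPolynomial σ ℝ) {s : Set (σ → ℝ)}
    (hs : Bornology.IsBounded s) : ∃ C, ∀ y ∈ s, |eval y p| ≤ C := by
  obtain ⟨C, hC⟩ :=
    hs.isCompact_closure.exists_bound_of_continuousOn (continuous_eval p).continuousOn
  exact ⟨C, fun y hy => hC y (subset_closure hy)⟩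

theorem tendstoUniformlyOn_eval_of_tendsto_repr {α κ : Type*} [Fintype κ]
    {P : Submodule ℝ (MvPolynomial σ ℝ)} (b : Module.Basis κ ℝ P) {s : Set (σ → ℝ)}
    (hs : Bornology.IsBounded s) {l : Filter α} {f : α → P} {f₀ : P}
    (hf : ∀ i, Tendsto (fun n => b.repr (f n) i) l (𝓝 (b.repr f₀ i))) :
    TendstoUniformlyOn (fun n y => eval y (f n : MvPolynomial σ ℝ))
      (fun y => eval y (f₀ : MvPolynomial σ ℝ)) l s := by
  have heval (p : P) (y : σ → ℝ) :
      ∑ i, b.repr p i * eval y (b i : MvPolynomial σ ℝ) = eval y (p : MvPolynomial σ ℝ) := by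
    conv_rhs => rw [← b.sum_repr p, AddSubmonoidClass.coe_finsetSum, map_sum]
    simp only [SetLike.val_smul, smul_eval]
  simpa only [heval] using
    tendstoUniformlyOn_sum_mul (fun i => exists_abs_eval_le (b i : MvPolynomial σ ℝ) hs) hf

end MvPolynomial

theorem DOPs_converge_uniformly_to_COPs_general (q d K : ℕ) (Ω : Set (Fin q → ℝ))
    (hbdd : Bornology.IsBounded Ω)
    (ω : (Fin q → ℝ) → ℝ)
    (x : (N : ℕ) → Fin N → (Fin q → ℝ))
    (r : (N : ℕ) → Fin N → ℝ)
    -- the fixed ordered monomial basis of ℙ_d(ℝ^q)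
    (e : Module.Basis (Fin K) ℝ (restrictTotalDegree (Fin q) ℝ d))
    -- convergence of the discrete inner products to the continuous one
    (hconv : ∀ f ∈ restrictTotalDegree (Fin q) ℝ d,
      ∀ g ∈ restrictTotalDegree (Fin q) ℝ d,
      Tendsto (fun N => ∑ n, r N n * eval (x N n) f * eval (x N n) g)
        atTop (nhds (∫ y in Ω, eval y f * eval y g * ω y)))
    (N₂ : ℕ)
    (πN : ℕ → Fin K → MvPolynomial (Fin q) ℝ)
    (π : Fin K → MvPolynomial (Fin q) ℝ)
    (hπNmem : ∀ N k, πN N k ∈ restrictTotalDegree (Fin q) ℝ d)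
    (hπmem : ∀ k, π k ∈ restrictTotalDegree (Fin q) ℝ d)
    -- πN N is the Gram--Schmidt orthonormalization of e w.r.t. [·,·]_N
    (hπNorth : ∀ N ≥ N₂, ∀ k l,
      (∑ n, r N n * eval (x N n) (πN N k) * eval (x N n) (πN N l))
        = if k = l then 1 else 0)
    (hπNtri : ∀ N ≥ N₂, ∀ k, ∃ c : ℝ, 0 < c ∧
      πN N k - c • ((e k : MvPolynomial (Fin q) ℝ))
        ∈ Submodule.span ℝ ((fun l => ((e l : MvPolynomial (Fin q) ℝ)))
            '' {l | l < k}))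
    -- π is the Gram--Schmidt orthonormalization of e w.r.t. ⟨·,·⟩
    (hπorth : ∀ k l, (∫ y in Ω, eval y (π k) * eval y (π l) * ω y)
        = if k = l then 1 else 0)
    (hπtri : ∀ k, ∃ c : ℝ, 0 < c ∧
      π k - c • ((e k : MvPolynomial (Fin q) ℝ))
        ∈ Submodule.span ℝ ((fun l => ((e l : MvPolynomial (Fin q) ℝ)))
            '' {l | l < k})) :
    ∀ k, TendstoUniformlyOn (fun N y => eval y (πN N k))
      (fun y => eval y (π k)) atTop Ω := by
  let P := restrictTotalDegree (Fin q) ℝ d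
  let B' (N : ℕ) : BilinForm ℝ P := (discreteForm (x N) (r N)).restrict P
  -- The Bochner integral is not known to be bilinear here (it is `0` off integrable functions),
  -- so the continuous form is the bilinear form with the limiting Gram matrix.
  let B : BilinForm ℝ P := Matrix.toLinearMap₂ e e <| Matrix.of fun i j =>
    ∫ y in Ω, eval y (e i : MvPolynomial (Fin q) ℝ) * eval y (e j : MvPolynomial (Fin q) ℝ) * ω y
  have hB (i j) : Tendsto (fun N => B' N (e i) (e j)) atTop (𝓝 (B (e i) (e j))) := by
    rw [Matrix.toLinearMap₂_apply_basis]
    exact hconv _ (e i).2 _ (e j).2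
  have hGS' : ∀ᶠ N in atTop, (B' N).IsGramSchmidt e fun k => ⟨πN N k, hπNmem N k⟩ :=
    eventually_atTop.2 ⟨N₂, fun N hN => ⟨hπNorth N hN, .of_coe (hπNtri N hN)⟩⟩
  have hGS : B.IsGramSchmidt e fun k => ⟨π k, hπmem k⟩ := by
    refine ⟨fun k l => ?_, .of_coe hπtri⟩
    rw [← hπorth k l]
    exact tendsto_nhds_unique (LinearMap.BilinForm.tendsto_apply_of_tendsto_repr e hB
      (fun _ => tendsto_const_nhds) (fun _ => tendsto_const_nhds)) (hconv _ (hπmem k) _ (hπmem l))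
  exact fun k => tendstoUniformlyOn_eval_of_tendsto_repr e hbdd (hGS.tendsto_repr e hB hGS' k)

/-- Lemma 5 of the paper: if the discrete inner products converge to the
continuous one on `ℙ_d(ℝ^q)`, then the discrete orthonormal polynomials
obtained by Gram--Schmidt from a fixed ordered monomial basis converge
uniformly on `Ω` to the continuous orthonormal polynomials. The Gram--Schmidt
output is characterized by orthonormality together with
`π_k ∈ c_k e_k + span{e_1, …, e_{k-1}}` for some `c_k > 0`. -/
theorem DOPs_converge_uniformly_to_COPs (q d K : ℕ) (Ω : Set (Fin q → ℝ))
    (hbdd : Bornology.IsBounded Ω)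
    (ω : (Fin q → ℝ) → ℝ) (hω : ∀ y ∈ Ω, 0 ≤ ω y)
    (hωint : IntegrableOn ω Ω)
    (x : (N : ℕ) → Fin N → (Fin q → ℝ)) (hx : ∀ N n, x N n ∈ Ω)
    (r : (N : ℕ) → Fin N → ℝ) (hr : ∀ N n, 0 ≤ r N n)
    -- the fixed ordered monomial basis of ℙ_d(ℝ^q)
    (e : Module.Basis (Fin K) ℝ (restrictTotalDegree (Fin q) ℝ d))
    -- convergence of the discrete inner products to the continuous one
    (hconv : ∀ f ∈ restrictTotalDegree (Fin q) ℝ d,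
      ∀ g ∈ restrictTotalDegree (Fin q) ℝ d,
      Tendsto (fun N => ∑ n, r N n * eval (x N n) f * eval (x N n) g)
        atTop (nhds (∫ y in Ω, eval y f * eval y g * ω y)))
    -- positive definiteness of the continuous inner product on ℙ_d(ℝ^q)
    (hposC : ∀ f ∈ restrictTotalDegree (Fin q) ℝ d, f ≠ 0 →
      0 < ∫ y in Ω, eval y f * eval y f * ω y)
    (N₂ : ℕ)
    -- positive definiteness of the discrete inner products for N ≥ N₂
    (hposD : ∀ N ≥ N₂, ∀ f ∈ restrictTotalDegree (Fin q) ℝ d, f ≠ 0 →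
      0 < ∑ n, r N n * eval (x N n) f * eval (x N n) f)
    (πN : ℕ → Fin K → MvPolynomial (Fin q) ℝ)
    (π : Fin K → MvPolynomial (Fin q) ℝ)
    (hπNmem : ∀ N k, πN N k ∈ restrictTotalDegree (Fin q) ℝ d)
    (hπmem : ∀ k, π k ∈ restrictTotalDegree (Fin q) ℝ d)
    -- πN N is the Gram--Schmidt orthonormalization of e w.r.t. [·,·]_N
    (hπNorth : ∀ N ≥ N₂, ∀ k l,
      (∑ n, r N n * eval (x N n) (πN N k) * eval (x N n) (πN N l))
        = if k = l then 1 else 0)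
    (hπNtri : ∀ N ≥ N₂, ∀ k, ∃ c : ℝ, 0 < c ∧
      πN N k - c • ((e k : MvPolynomial (Fin q) ℝ))
        ∈ Submodule.span ℝ ((fun l => ((e l : MvPolynomial (Fin q) ℝ)))
            '' {l | l < k}))
    -- π is the Gram--Schmidt orthonormalization of e w.r.t. ⟨·,·⟩
    (hπorth : ∀ k l, (∫ y in Ω, eval y (π k) * eval y (π l) * ω y)
        = if k = l then 1 else 0)
    (hπtri : ∀ k, ∃ c : ℝ, 0 < c ∧
      π k - c • ((e k : MvPolynomial (Fin q) ℝ))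
        ∈ Submodule.span ℝ ((fun l => ((e l : MvPolynomial (Fin q) ℝ)))
            '' {l | l < k})) :
    ∀ k, TendstoUniformlyOn (fun N y => eval y (πN N k))
      (fun y => eval y (π k)) atTop Ω :=
  DOPs_converge_uniformly_to_COPs_general q d K Ω hbdd ω x r e hconv N₂ πN π hπNmem hπmem hπNorth
    hπNtri hπorth hπtri
end

section
/- Under the assumptions of the previous theorem (convergence of the discrete inner product on ℙ_d(ℝ^q) and unisolvency of X_{N₀}), there exists N₁ such that for all N ≥ N₁ the ℓ¹ cubature formula with degree of exactness d, whose weights minimize ‖w‖_1 over { w : P w = m }, is perfectly stable, i.e., κ(w^{ℓ1}) = I[1]. -/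
/-!
Exactness at the constant polynomial gives `∑ w = I[1]` for every admissible `w`, so
`κ(w) ≥ I[1]`, and an `ℓ¹`-minimizer is perfectly stable as soon as some admissible weight
vector is nonnegative. The least-squares weights `w_n = ω(x_n) |Ω| / N · s_N(x_n)` are such a
vector for large `N`: here `s_N ∈ ℙ_d` solves the normal equations `G_N c = m` of the discrete
Gram matrix. As `N → ∞`, `G_N` tends to the continuous Gram matrix `G`, which is invertible because
a nonzero polynomial vanishes only on a null set, and `G⁻¹ m` is the coefficient vector of `1`.
Hence `s_N → 1` uniformly on the bounded set `Ω`, and the weights are eventually nonnegative.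
-/

open MvPolynomial MeasureTheory Filter Topology Matrix

theorem MvPolynomial.one_mem_restrictTotalDegree {σ R : Type*} [CommSemiring R] {m : ℕ} :
    (1 : MvPolynomial σ R) ∈ restrictTotalDegree σ R m :=
  (mem_restrictTotalDegree _ _ _).2 (by simp)

/-- Fubini in the first variable: for almost every value of the others, a fixed nonzero
coefficient of `p` in the first variable stays nonzero, leaving finitely many roots. -/
theorem MvPolynomial.ae_eval_ne_zero :
    ∀ {n : ℕ} {p : MvPolynomial (Fin n) ℝ}, p ≠ 0 → ∀ᵐ y : Fin n → ℝ, eval y p ≠ 0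
  | 0, p, hp => by
    obtain ⟨c, rfl⟩ := C_surjective (Fin 0) p
    simp_all
  | n + 1, p, hp => by
    set P := finSuccEquiv ℝ n p
    obtain ⟨k, hk⟩ : ∃ k, P.coeff k ≠ 0 := by
      by_contra! h
      exact hp ((finSuccEquiv ℝ n).injective (by ext1 k; simp [h k, P]))
    set Z : Set ((Fin n → ℝ) × ℝ) := {z | eval (Fin.cons z.2 z.1) p = 0}
    have hZ : MeasurableSet Z :=
      measurableSet_eq_fun ((continuous_eval p).comp
        (continuous_snd.finCons continuous_fst)).measurable measurable_const
    have e := (Measure.measurePreserving_swap (μ := volume) (ν := volume)).comp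
      (volume_preserving_piFinSuccAbove (fun _ : Fin (n + 1) => ℝ) 0)
    have hpre : {y | ¬eval y p ≠ 0} =
        (Prod.swap ∘ MeasurableEquiv.piFinSuccAbove (fun _ => ℝ) 0) ⁻¹' Z := by
      ext y
      simp [Z, MeasurableEquiv.piFinSuccAbove, Fin.cons_self_tail]
    rw [ae_iff, hpre, e.measure_preimage hZ.nullMeasurableSet, Measure.measure_prod_null hZ]
    filter_upwards [ae_eval_ne_zero hk] with s hs
    refine measure_mono_null (fun a ha => ?_) ((Polynomial.finite_setOfPred_isRoot
      (p := P.map (eval s)) fun h => hs ?_).measure_zero volume)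
    · exact (eval_eq_eval_mv_eval' s a p).symm.trans ha
    · simpa using congr_arg (Polynomial.coeff · k) h

theorem sum_abs_eq_sum_of_sum_abs_le {κ : Type*} [Fintype κ] {w v : κ → ℝ}
    (hv : ∀ n, 0 ≤ v n) (hsum : ∑ n, w n = ∑ n, v n) (hle : ∑ n, |w n| ≤ ∑ n, |v n|) :
    ∑ n, |w n| = ∑ n, w n := by
  have habs : ∑ n, |v n| = ∑ n, v n := Finset.sum_congr rfl fun n _ => abs_of_nonneg (hv n)
  linarith [Finset.sum_le_sum fun n (_ : n ∈ Finset.univ) => le_abs_self (w n)]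

theorem Filter.Tendsto.inv_mulVec_mulVec {α n : Type*} [Fintype n] [DecidableEq n] {l : Filter α}
    {A : α → Matrix n n ℝ} {B : Matrix n n ℝ} (hA : Tendsto A l (𝓝 B)) (hB : B.det ≠ 0)
    (u : n → ℝ) : Tendsto (fun a => (A a)⁻¹ *ᵥ (B *ᵥ u)) l (𝓝 u) := by
  have hinv : ContinuousAt Inv.inv B :=
    continuousAt_matrix_inv B (by rw [Ring.inverse_eq_inv']; exact continuousAt_inv₀ hB)
  have h : Tendsto (fun a => (A a)⁻¹ *ᵥ (B *ᵥ u)) l (𝓝 (B⁻¹ *ᵥ (B *ᵥ u))) :=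
    ((continuous_id.matrix_mulVec continuous_const).tendsto _).comp (hinv.tendsto.comp hA)
  rwa [mulVec_mulVec, nonsing_inv_mul _ hB.isUnit, one_mulVec] at h

theorem eventually_forall_sum_mul_pos {α X ι : Type*} [Fintype ι] {l : Filter α} {S : Set X}
    {f : ι → X → ℝ} {c : α → ι → ℝ} {u : ι → ℝ} (hc : Tendsto c l (𝓝 u))
    (hf : ∀ j, ∃ C, ∀ y ∈ S, |f j y| ≤ C) (hu : ∀ y ∈ S, ∑ j, u j * f j y = 1) :
    ∀ᶠ a in l, ∀ y ∈ S, 0 < ∑ j, c a j * f j y := by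
  choose C hC using hf
  set K := ∑ j, |C j|
  have hdev : ∀ a, ∀ y ∈ S, |∑ j, c a j * f j y - 1| ≤ dist (c a) u * K := by
    intro a y hy
    calc |∑ j, c a j * f j y - 1| = |∑ j, (c a j - u j) * f j y| := by
          simp only [sub_mul, Finset.sum_sub_distrib, hu y hy]
      _ ≤ ∑ j, |c a j - u j| * |f j y| := by
          simpa only [abs_mul] using
            Finset.abs_sum_le_sum_abs (fun j => (c a j - u j) * f j y) .univ
      _ ≤ ∑ j, dist (c a) u * |C j| := by
          refine Finset.sum_le_sum fun j _ => mul_le_mul (dist_le_pi_dist (c a) u j)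
            ((hC j y hy).trans (le_abs_self _)) (abs_nonneg _) dist_nonneg
      _ = dist (c a) u * K := Finset.mul_sum .. |>.symm
  have hK0 : 0 ≤ K := Finset.sum_nonneg fun j _ => abs_nonneg (C j)
  filter_upwards [Metric.tendsto_nhds.1 hc (1 / (K + 1)) (by positivity)] with a ha y hy
  have hK : dist (c a) u * K < 1 := by
    calc dist (c a) u * K ≤ 1 / (K + 1) * K := by gcongr
      _ < 1 := by rw [div_mul_eq_mul_div, one_mul, div_lt_one (by positivity)]; linarith
  linarith [(abs_le.1 (hdev a y hy)).1]

namespace Cubature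

variable {σ ι κ : Type*}

section Gram

variable {R A : Type*} [CommRing R] [CommRing A] [Algebra R A]

def gram (L : A →ₗ[R] R) (E : ι → A) : Matrix ι ι R := Matrix.of fun i j => L (E i * E j)

variable [Fintype ι] (L : A →ₗ[R] R) (E : ι → A)

theorem gram_mulVec_apply (c : ι → R) (i : ι) :
    (gram L E *ᵥ c) i = L (E i * ∑ j, c j • E j) := by
  simp [gram, Matrix.mulVec, dotProduct, Finset.mul_sum, mul_comm]

theorem dotProduct_gram_mulVec (c : ι → R) :
    c ⬝ᵥ (gram L E *ᵥ c) = L ((∑ j, c j • E j) * ∑ j, c j • E j) := by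
  simp [dotProduct, gram_mulVec_apply, Finset.sum_mul]

theorem det_gram_ne_zero [DecidableEq ι] [IsDomain R] (hE : LinearIndependent R E)
    (hL : ∀ r, L (r * r) = 0 → r = 0) : (gram L E).det ≠ 0 := by
  intro hdet
  obtain ⟨c, hc, hGc⟩ := Matrix.exists_mulVec_eq_zero_iff.2 hdet
  refine hc (funext (Fintype.linearIndependent_iff.1 hE c (hL _ ?_)))
  rw [← dotProduct_gram_mulVec, hGc, dotProduct_zero]

end Gram

noncomputable def nodalSum [Fintype κ] (y : κ → σ → ℝ) (r : κ → ℝ) :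
    MvPolynomial σ ℝ →ₗ[ℝ] ℝ where
  toFun p := ∑ n, r n * eval (y n) p
  map_add' p p' := by simp only [map_add, mul_add, Finset.sum_add_distrib]
  map_smul' a p := by
    simp only [smul_eval, Finset.mul_sum, RingHom.id_apply, smul_eq_mul, mul_left_comm]

@[simp]
theorem nodalSum_apply [Fintype κ] (y : κ → σ → ℝ) (r : κ → ℝ) (p : MvPolynomial σ ℝ) :
    nodalSum y r p = ∑ n, r n * eval (y n) p := rfl

noncomputable def weightedIntegral (μ : Measure (σ → ℝ)) (ω : (σ → ℝ) → ℝ)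
    (hint : ∀ p : MvPolynomial σ ℝ, Integrable (fun y => eval y p * ω y) μ) :
    MvPolynomial σ ℝ →ₗ[ℝ] ℝ where
  toFun p := ∫ y, eval y p * ω y ∂μ
  map_add' p p' := by simp only [map_add, add_mul]; exact integral_add (hint p) (hint p')
  map_smul' a p := by
    simp only [smul_eval, mul_assoc, integral_const_mul, RingHom.id_apply, smul_eq_mul]

@[simp]
theorem weightedIntegral_apply (μ : Measure (σ → ℝ)) (ω : (σ → ℝ) → ℝ)
    (hint : ∀ p : MvPolynomial σ ℝ, Integrable (fun y => eval y p * ω y) μ) (p : MvPolynomial σ ℝ) :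
    weightedIntegral μ ω hint p = ∫ y, eval y p * ω y ∂μ := rfl

theorem exists_forall_abs_eval_le [Fintype σ] {Ω : Set (σ → ℝ)} (hbdd : Bornology.IsBounded Ω)
    (p : MvPolynomial σ ℝ) : ∃ C, ∀ y ∈ Ω, |eval y p| ≤ C :=
  (hbdd.isCompact_closure.exists_bound_of_continuousOn (continuous_eval p).continuousOn).imp
    fun _ hC y hy => hC y (subset_closure hy)

theorem integrableOn_eval_mul [Fintype σ] {μ : Measure (σ → ℝ)} {Ω : Set (σ → ℝ)}
    {ω : (σ → ℝ) → ℝ} (hΩ : MeasurableSet Ω) (hbdd : Bornology.IsBounded Ω)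
    (hω : IntegrableOn ω Ω μ) (p : MvPolynomial σ ℝ) :
    IntegrableOn (fun y => eval y p * ω y) Ω μ := by
  obtain ⟨C, hC⟩ := exists_forall_abs_eval_le hbdd p
  exact hω.bdd_mul (continuous_eval p).aestronglyMeasurable (ae_restrict_of_forall_mem hΩ hC)

theorem integral_eval_mul_self_mul_pos {q : ℕ} {Ω : Set (Fin q → ℝ)} {ω : (Fin q → ℝ) → ℝ}
    (hΩ : MeasurableSet Ω) (hω : ∀ y ∈ Ω, 0 ≤ ω y) (hI : 0 < ∫ y in Ω, ω y)
    {r : MvPolynomial (Fin q) ℝ} (hint : IntegrableOn (fun y => eval y (r * r) * ω y) Ω)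
    (hr : r ≠ 0) : 0 < ∫ y in Ω, eval y (r * r) * ω y := by
  have hnonneg : 0 ≤ᵐ[volume.restrict Ω] fun y => eval y (r * r) * ω y :=
    ae_restrict_of_forall_mem hΩ fun y hy => by
      show 0 ≤ eval y (r * r) * ω y
      rw [map_mul]
      exact mul_nonneg (mul_self_nonneg _) (hω y hy)
  refine (integral_nonneg_of_ae hnonneg).lt_of_ne fun h => hI.ne' (integral_eq_zero_of_ae ?_)
  filter_upwards [(integral_eq_zero_iff_of_nonneg_ae hnonneg hint).1 h.symm,
    ae_restrict_of_ae (ae_eval_ne_zero hr)] with y hy hry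
  simpa [hry] using hy

/-- The least-squares weights, once `c` solves the normal equations
`gram (nodalSum y r) E *ᵥ c = m` for the moments `m`. -/
noncomputable def lsWeights [Fintype ι] (y : κ → σ → ℝ) (r : κ → ℝ)
    (E : ι → MvPolynomial σ ℝ) (c : ι → ℝ) : κ → ℝ :=
  fun n => r n * eval (y n) (∑ j, c j • E j)

theorem nodalSum_lsWeights [Fintype κ] [Fintype ι] (y : κ → σ → ℝ) (r : κ → ℝ)
    (E : ι → MvPolynomial σ ℝ) (c : ι → ℝ) (p : MvPolynomial σ ℝ) :
    nodalSum y (lsWeights y r E c) p = nodalSum y r (p * ∑ j, c j • E j) := by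
  simp only [nodalSum_apply, lsWeights, map_mul, mul_comm, mul_left_comm]

theorem det_gram_weightedIntegral_ne_zero [Fintype ι] [DecidableEq ι] {q : ℕ}
    {Ω : Set (Fin q → ℝ)} {ω : (Fin q → ℝ) → ℝ} (hΩ : MeasurableSet Ω) (hω : ∀ y ∈ Ω, 0 ≤ ω y)
    (hI : 0 < ∫ y in Ω, ω y)
    (hint : ∀ p : MvPolynomial (Fin q) ℝ, Integrable (fun y => eval y p * ω y) (volume.restrict Ω))
    {E : ι → MvPolynomial (Fin q) ℝ} (hE : LinearIndependent ℝ E) :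
    (gram (weightedIntegral (volume.restrict Ω) ω hint) E).det ≠ 0 :=
  det_gram_ne_zero _ E hE fun _ hr =>
    by_contra fun hr0 => (integral_eval_mul_self_mul_pos hΩ hω hI (hint _) hr0).ne' hr

theorem nodalSum_lsWeights_eq [Fintype κ] [Fintype ι] {V : Submodule ℝ (MvPolynomial σ ℝ)}
    (b : Module.Basis ι ℝ V) (y : κ → σ → ℝ) (r : κ → ℝ) (I : MvPolynomial σ ℝ →ₗ[ℝ] ℝ)
    {c : ι → ℝ}
    (hc : gram (nodalSum y r) (fun i => (b i : MvPolynomial σ ℝ)) *ᵥ c = fun i => I (b i))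
    {f : MvPolynomial σ ℝ} (hf : f ∈ V) :
    nodalSum y (lsWeights y r (fun i => b i) c) f = I f := by
  refine LinearMap.congr_fun (b.ext (f₁ := nodalSum y _ ∘ₗ V.subtype) (f₂ := I ∘ₗ V.subtype)
    fun i => ?_) ⟨f, hf⟩
  rw [LinearMap.comp_apply, LinearMap.comp_apply, Submodule.subtype_apply, nodalSum_lsWeights,
    ← congr_fun hc i, gram_mulVec_apply]

theorem eventually_exists_nonneg_exact_weights {q d : ℕ} {Ω : Set (Fin q → ℝ)}
    (hΩ : MeasurableSet Ω) (hbdd : Bornology.IsBounded Ω) {ω : (Fin q → ℝ) → ℝ}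
    (hω : ∀ y ∈ Ω, 0 ≤ ω y) (hωint : IntegrableOn ω Ω) (hI : 0 < ∫ y in Ω, ω y)
    {x : ℕ → (Fin q → ℝ)} (hx : ∀ n, x n ∈ Ω)
    (hconv : ∀ f ∈ restrictTotalDegree (Fin q) ℝ d,
      ∀ g ∈ restrictTotalDegree (Fin q) ℝ d,
      Tendsto (fun N : ℕ => ∑ n : Fin N,
          (ω (x n) * (MeasureTheory.volume Ω).toReal / N)
            * eval (x n) f * eval (x n) g)
        atTop (nhds (∫ y in Ω, eval y f * eval y g * ω y))) :
    ∀ᶠ N in atTop, ∃ v : Fin N → ℝ, (∀ n, 0 ≤ v n) ∧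
      ∀ f ∈ restrictTotalDegree (Fin q) ℝ d,
        ∑ n, v n * eval (x n) f = ∫ y in Ω, eval y f * ω y := by
  classical
  set V := restrictTotalDegree (Fin q) ℝ d
  let b := Module.finBasis ℝ V
  set E : Fin _ → MvPolynomial (Fin q) ℝ := fun i => b i
  have hint : ∀ p, Integrable (fun y => eval y p * ω y) (volume.restrict Ω) :=
    integrableOn_eval_mul hΩ hbdd hωint
  set I := weightedIntegral (volume.restrict Ω) ω hint
  set r : (N : ℕ) → Fin N → ℝ := fun N n => ω (x n) * (volume Ω).toReal / N
  set G : ℕ → Matrix _ _ ℝ := fun N => gram (nodalSum (fun n : Fin N => x n) (r N)) E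
  set m := fun i => I (E i)
  have hG : Tendsto G atTop (𝓝 (gram I E)) :=
    tendsto_pi_nhds.2 fun i => tendsto_pi_nhds.2 fun j => by
      simpa only [G, I, r, gram, Matrix.of_apply, nodalSum_apply, weightedIntegral_apply, map_mul,
        mul_assoc] using hconv (E i) (b i).2 (E j) (b j).2
  have hdet : (gram I E).det ≠ 0 :=
    det_gram_weightedIntegral_ne_zero hΩ hω hI hint
      (b.linearIndependent.map' V.subtype V.ker_subtype)
  obtain ⟨u, hu⟩ : ∃ u : Fin _ → ℝ, ∑ j, u j • E j = 1 :=
    ⟨b.repr ⟨1, one_mem_restrictTotalDegree⟩, by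
      simp only [E, ← Submodule.coe_smul, ← Submodule.coe_sum, b.sum_repr]⟩
  have hm : gram I E *ᵥ u = m := funext fun i => by rw [gram_mulVec_apply, hu, mul_one]
  have hc : Tendsto (fun N => (G N)⁻¹ *ᵥ m) atTop (𝓝 u) := hm ▸ hG.inv_mulVec_mulVec hdet u
  have hdetG : Tendsto (fun N => (G N).det) atTop (𝓝 (gram I E).det) :=
    (continuous_id.matrix_det.tendsto _).comp hG
  filter_upwards [hdetG.eventually_ne hdet,
    eventually_forall_sum_mul_pos hc (fun j => exists_forall_abs_eval_le hbdd (E j))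
      fun y _ => by simpa [smul_eval] using congr_arg (eval y) hu] with N hdetN hpos
  refine ⟨lsWeights (fun n : Fin N => x n) (r N) E ((G N)⁻¹ *ᵥ m), fun n => ?_,
    fun f hf => nodalSum_lsWeights_eq b (fun n : Fin N => x n) (r N) I ?_ hf⟩
  · exact mul_nonneg (by have := hω _ (hx n); positivity)
      (by simpa [smul_eval] using (hpos (x n) (hx n)).le)
  · change G N *ᵥ ((G N)⁻¹ *ᵥ m) = m
    rw [mulVec_mulVec, mul_nonsing_inv _ hdetN.isUnit, one_mulVec]

end Cubature

open Cubature

theorem l1_CF_eventually_perfectly_stable_general (q d N₀ : ℕ)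
    (Ω : Set (Fin q → ℝ)) (hΩ : MeasurableSet Ω)
    (hbdd : Bornology.IsBounded Ω)
    (ω : (Fin q → ℝ) → ℝ) (hω : ∀ y ∈ Ω, 0 ≤ ω y) (hωint : IntegrableOn ω Ω)
    (hI : 0 < ∫ y in Ω, ω y)
    (x : ℕ → (Fin q → ℝ)) (hx : ∀ n, x n ∈ Ω)
    (hconv : ∀ f ∈ restrictTotalDegree (Fin q) ℝ d,
      ∀ g ∈ restrictTotalDegree (Fin q) ℝ d,
      Tendsto (fun N : ℕ => ∑ n : Fin N,
          (ω (x n) * (MeasureTheory.volume Ω).toReal / N)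
            * eval (x n) f * eval (x n) g)
        atTop (nhds (∫ y in Ω, eval y f * eval y g * ω y))) :
    ∃ N₁ ≥ N₀, ∀ N ≥ N₁, ∀ w : Fin N → ℝ,
      -- w satisfies the exactness conditions of degree d
      (∀ f ∈ restrictTotalDegree (Fin q) ℝ d,
        (∑ n, w n * eval (x n) f) = ∫ y in Ω, eval y f * ω y) →
      -- w minimizes ‖·‖₁ among all such weight vectors
      (∀ v : Fin N → ℝ,
        (∀ f ∈ restrictTotalDegree (Fin q) ℝ d,
          (∑ n, v n * eval (x n) f) = ∫ y in Ω, eval y f * ω y) →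
        ∑ n, |w n| ≤ ∑ n, |v n|) →
      ∑ n, |w n| = ∫ y in Ω, ω y := by
  obtain ⟨N₁, hN₁⟩ :=
    eventually_atTop.1 (eventually_exists_nonneg_exact_weights hΩ hbdd hω hωint hI hx hconv)
  refine ⟨max N₀ N₁, le_max_left _ _, fun N hN w hw hmin => ?_⟩
  obtain ⟨v, hv0, hv⟩ := hN₁ N (le_of_max_le_right hN)
  have hw1 : ∑ n, w n = ∫ y in Ω, ω y := by simpa using hw 1 one_mem_restrictTotalDegree
  have hv1 : ∑ n, v n = ∫ y in Ω, ω y := by simpa using hv 1 one_mem_restrictTotalDegree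
  rw [sum_abs_eq_sum_of_sum_abs_le hv0 (hw1.trans hv1.symm) (hmin v hv), hw1]

/-- Corollary to the main theorem: under the same assumptions, the
`ℓ¹`-cubature formula with degree of exactness `d` (whose weights minimize
`‖w‖₁` among all weight vectors satisfying the exactness conditions) is
perfectly stable, i.e. `κ(w^{ℓ1}) = I[1]`, for all sufficiently large `N`. -/
theorem l1_CF_eventually_perfectly_stable (q d N₀ : ℕ)
    (Ω : Set (Fin q → ℝ)) (hΩ : MeasurableSet Ω)
    (hbdd : Bornology.IsBounded Ω)
    (hvol : 0 < (MeasureTheory.volume Ω).toReal)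
    (ω : (Fin q → ℝ) → ℝ) (hω : ∀ y ∈ Ω, 0 ≤ ω y) (hωint : IntegrableOn ω Ω)
    (hI : 0 < ∫ y in Ω, ω y)
    (x : ℕ → (Fin q → ℝ)) (hx : ∀ n, x n ∈ Ω)
    (huni : ∀ f ∈ restrictTotalDegree (Fin q) ℝ d,
      (∀ n < N₀, eval (x n) f = 0) → f = 0)
    (hωpos : ∀ n < N₀, 0 < ω (x n))
    (hconv : ∀ f ∈ restrictTotalDegree (Fin q) ℝ d,
      ∀ g ∈ restrictTotalDegree (Fin q) ℝ d,
      Tendsto (fun N : ℕ => ∑ n : Fin N,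
          (ω (x n) * (MeasureTheory.volume Ω).toReal / N)
            * eval (x n) f * eval (x n) g)
        atTop (nhds (∫ y in Ω, eval y f * eval y g * ω y))) :
    ∃ N₁ ≥ N₀, ∀ N ≥ N₁, ∀ w : Fin N → ℝ,
      -- w satisfies the exactness conditions of degree d
      (∀ f ∈ restrictTotalDegree (Fin q) ℝ d,
        (∑ n, w n * eval (x n) f) = ∫ y in Ω, eval y f * ω y) →
      -- w minimizes ‖·‖₁ among all such weight vectors
      (∀ v : Fin N → ℝ,
        (∀ f ∈ restrictTotalDegree (Fin q) ℝ d,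
          (∑ n, v n * eval (x n) f) = ∫ y in Ω, eval y f * ω y) →
        ∑ n, |w n| ≤ ∑ n, |v n|) →
      ∑ n, |w n| = ∫ y in Ω, ω y :=
  l1_CF_eventually_perfectly_stable_general q d N₀ Ω hΩ hbdd ω hω hωint hI x hx hconv
end
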